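/- Suppose u is a sufficiently regular solution of u_t = p u_xx + θ u (p > 0, θ ∈ ℝ) on (0,1)×(0,T) with u(t,0) = 0, u(t,1) = U(t), where U(t) = ∫_0^1 k(s)u(t,s)ds with k(x) = Σ_{n=1}^N k_n √2 sin(nπx). If U(t) = 0 for all t ∈ [0,T), then for every n = 1, ..., N and every t ∈ [0,T): k_n ∫_0^1 sin(nπx) u(t,x) dx = 0. -/

import Mathlib

open Real intervalIntegral



open Set Filter Topology



lemma integral_cos_int (K : ℤ) (hK : K ≠ 0) :
    ∫ x in (0:ℝ)..1, Real.cos ((K:ℝ) * π * x) = 0 := by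
  have hKπ : (K:ℝ) * π ≠ 0 := by
    have h0 : (K:ℝ) ≠ 0 := Int.cast_ne_zero.mpr hK
    exact mul_ne_zero h0 Real.pi_ne_zero
  have h : ∀ x : ℝ, HasDerivAt (fun y => Real.sin ((K:ℝ)*π*y) / ((K:ℝ)*π))
      (Real.cos ((K:ℝ)*π*x)) x := by
    intro x
    have h1 : HasDerivAt (fun y : ℝ => (K:ℝ)*π*y) ((K:ℝ)*π) x := by
      simpa using (hasDerivAt_id x).const_mul ((K:ℝ)*π)
    have h2 := (Real.hasDerivAt_sin ((K:ℝ)*π*x)).comp x h1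
    have h3 := h2.div_const ((K:ℝ)*π)
    refine h3.congr_deriv ?_
    rw [mul_div_assoc, div_self hKπ, mul_one]
  rw [intervalIntegral.integral_eq_sub_of_hasDerivAt (fun x _ => h x)
    ((Real.continuous_cos.comp (by continuity)).intervalIntegrable 0 1)]
  have e1 : Real.sin ((K:ℝ)*π*1) = 0 := by
    rw [mul_one]; exact Real.sin_int_mul_pi K
  simp [e1]

lemma sin_orthogonal (n m : ℤ) (h1 : n - m ≠ 0) (h2 : n + m ≠ 0) :
    ∫ x in (0:ℝ)..1, Real.sin ((n:ℝ) * π * x) * Real.sin ((m:ℝ) * π * x) = 0 := by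
  have key : ∀ x : ℝ, Real.sin ((n:ℝ) * π * x) * Real.sin ((m:ℝ) * π * x)
      = Real.cos (((n - m : ℤ):ℝ) * π * x) / 2 - Real.cos (((n + m : ℤ):ℝ) * π * x) / 2 := by
    intro x
    have h := Real.cos_sub_cos (((n - m : ℤ):ℝ) * π * x) (((n + m : ℤ):ℝ) * π * x)
    have e1 : ((((n - m : ℤ):ℝ) * π * x) + (((n + m : ℤ):ℝ) * π * x)) / 2 = (n:ℝ) * π * x := by
      push_cast; ring
    have e2 : ((((n - m : ℤ):ℝ) * π * x) - (((n + m : ℤ):ℝ) * π * x)) / 2 = -((m:ℝ) * π * x) := by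
      push_cast; ring
    rw [e1, e2, Real.sin_neg] at h
    linarith
  rw [intervalIntegral.integral_congr (g := fun x => Real.cos (((n - m : ℤ):ℝ) * π * x) / 2
      - Real.cos (((n + m : ℤ):ℝ) * π * x) / 2) (fun x _ => key x)]
  have i1 : IntervalIntegrable (fun x => Real.cos (((n - m : ℤ):ℝ) * π * x) / 2) MeasureTheory.volume 0 1 := by
    apply Continuous.intervalIntegrable; continuity
  have i2 : IntervalIntegrable (fun x => Real.cos (((n + m : ℤ):ℝ) * π * x) / 2) MeasureTheory.volume 0 1 := by
    apply Continuous.intervalIntegrable; continuity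
  rw [intervalIntegral.integral_sub i1 i2]
  rw [intervalIntegral.integral_div, intervalIntegral.integral_div,
    integral_cos_int _ h1, integral_cos_int _ h2]
  norm_num



lemma re_mul_exp (c : ℂ) (θ : ℝ) :
    (c * Complex.exp ((θ:ℂ) * Complex.I)).re = c.re * Real.cos θ - c.im * Real.sin θ := by
  rw [Complex.exp_mul_I]
  simp [Complex.mul_re, Complex.add_re, Complex.add_im, Complex.mul_im,
    ← Complex.ofReal_cos, ← Complex.ofReal_sin]

lemma sine_approx (f : ℝ → ℝ) (hf : Continuous f) (h0 : f 0 = 0) (h1 : f 1 = 0)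
    (ε : ℝ) (hε : 0 < ε) :
    ∃ (F : Finset ℤ) (γ : ℤ → ℝ), ∀ x ∈ Set.Icc (0:ℝ) 1,
      |(∑ m ∈ F, γ m * Real.sin ((m:ℝ) * π * x)) - f x| ≤ ε := by
  haveI : Fact ((0:ℝ) < 2) := ⟨by norm_num⟩
  classical
  -- the odd 2-periodic extension
  set cl : ℝ → ℝ := fun y => max 0 (min 1 y) with hcl
  have hclc : Continuous cl := continuous_const.max (continuous_const.min continuous_id)
  set H : ℝ → ℝ := fun y => f (cl y) - f (cl (-y)) with hH
  have hHc : Continuous H := (hf.comp hclc).sub ((hf.comp hclc).comp continuous_neg)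
  have hHodd : ∀ y, H (-y) = - H y := by
    intro y; simp only [hH, neg_neg]; ring
  have hcl_of_mem : ∀ y : ℝ, y ∈ Set.Icc (0:ℝ) 1 → cl y = y := by
    intro y hy
    simp only [hcl]
    rw [min_eq_right hy.2, max_eq_right hy.1]
  have hcl_neg : ∀ y : ℝ, y ∈ Set.Icc (0:ℝ) 1 → cl (-y) = 0 := by
    intro y hy
    simp only [hcl]
    rw [min_eq_right (by linarith [hy.1] : -y ≤ 1), max_eq_left (by linarith [hy.1])]
  have hHval : ∀ y ∈ Set.Icc (0:ℝ) 1, H y = f y := by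
    intro y hy
    simp only [hH, hcl_of_mem y hy, hcl_neg y hy, h0, sub_zero]
  have hHend : H (-1) = H (-1 + 2) := by
    have e1 : H 1 = f 1 := hHval 1 ⟨by norm_num, le_refl 1⟩
    have e2 : H (-1) = - H 1 := hHodd 1
    have e3 : H 1 = 0 := by rw [e1, h1]
    rw [show (-1:ℝ)+2 = 1 from by norm_num, e2, e3]; norm_num
  -- lift to the circle
  set G : AddCircle (2:ℝ) → ℝ := AddCircle.liftIco 2 (-1) H with hG
  have hGc : Continuous G := AddCircle.liftIco_continuous hHend (hHc.continuousOn)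
  set Gc : C(AddCircle (2:ℝ), ℂ) := ⟨fun q => (G q : ℂ), Complex.continuous_ofReal.comp hGc⟩
    with hGcdef
  -- approximate by a Fourier polynomial
  have hdense := span_fourier_closure_eq_top (T := 2)
  have hGmem : Gc ∈ (Submodule.span ℂ (Set.range (@fourier 2))).topologicalClosure := by
    rw [hdense]; trivial
  rw [← SetLike.mem_coe, Submodule.topologicalClosure_coe] at hGmem
  obtain ⟨Q, hQmem, hQdist⟩ := Metric.mem_closure_iff.mp hGmem ε hε
  rw [SetLike.mem_coe, Finsupp.mem_span_range_iff_exists_finsupp] at hQmem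
  obtain ⟨c, hc⟩ := hQmem
  refine ⟨c.support, fun m => -((c m).im), ?_⟩
  intro x hx
  -- evaluation of Q at real points
  have hQev : ∀ y : ℝ, Q ((y:ℝ) : AddCircle (2:ℝ))
      = ∑ m ∈ c.support, (c m) * Complex.exp (((π * m * y : ℝ):ℂ) * Complex.I) := by
    intro y
    rw [← hc, Finsupp.sum]
    simp only [ContinuousMap.coe_sum, Finset.sum_apply, ContinuousMap.coe_smul, Pi.smul_apply,
      smul_eq_mul, fourier_coe_apply]
    refine Finset.sum_congr rfl (fun m _ => ?_)
    congr 1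
    push_cast
    ring
  have key : ∀ y : ℝ, (Q ((y:ℝ) : AddCircle (2:ℝ))).re - (Q ((-y:ℝ) : AddCircle (2:ℝ))).re
      = 2 * ∑ m ∈ c.support, (-((c m).im)) * Real.sin (π * m * y) := by
    intro y
    rw [hQev y, hQev (-y), Complex.re_sum, Complex.re_sum, ← Finset.sum_sub_distrib,
      Finset.mul_sum]
    refine Finset.sum_congr rfl (fun m _ => ?_)
    rw [re_mul_exp, re_mul_exp]
    have e : π * (m:ℝ) * (-y) = -(π * m * y) := by ring
    rw [e, Real.cos_neg, Real.sin_neg]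
    ring
  -- values of G
  have hmem' : (-x : ℝ) ∈ Set.Ico (-1 : ℝ) (-1 + 2) := by
    constructor
    · linarith [hx.2]
    · have := hx.1; norm_num; linarith
  have hq' : G ((-x:ℝ) : AddCircle (2:ℝ)) = - f x := by
    rw [hG, AddCircle.liftIco_coe_apply hmem', hHodd, hHval x hx]
  have hq : G ((x:ℝ) : AddCircle (2:ℝ)) = f x := by
    rcases lt_or_eq_of_le hx.2 with h | h
    · have hmem : (x : ℝ) ∈ Set.Ico (-1 : ℝ) (-1 + 2) := by
        constructor
        · linarith [hx.1]
        · norm_num; exact h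
      rw [hG, AddCircle.liftIco_coe_apply hmem, hHval x hx]
    · subst h
      have e1 : ((1:ℝ) : AddCircle (2:ℝ)) = ((-1:ℝ) : AddCircle (2:ℝ)) := by
        have e0 := AddCircle.coe_add_period (2:ℝ) (-1)
        rw [show (-1:ℝ) + 2 = 1 by norm_num] at e0
        exact e0
      have hm1 : (-1 : ℝ) ∈ Set.Ico (-1 : ℝ) (-1 + 2) := by constructor <;> norm_num
      have e3 : H 1 = f 1 := hHval 1 ⟨by norm_num, le_refl 1⟩
      calc G ((1:ℝ) : AddCircle (2:ℝ)) = G ((-1:ℝ) : AddCircle (2:ℝ)) := by rw [e1]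
        _ = H (-1) := by rw [hG]; exact AddCircle.liftIco_coe_apply hm1
        _ = f 1 := by rw [hHodd 1, e3, h1]; norm_num
  -- the estimate
  have hb1 : |(Q ((x:ℝ) : AddCircle (2:ℝ))).re - G ((x:ℝ) : AddCircle (2:ℝ))| ≤ dist Gc Q := by
    have h1' : (Q ((x:ℝ) : AddCircle (2:ℝ))).re - G ((x:ℝ) : AddCircle (2:ℝ))
        = ((Q - Gc) ((x:ℝ) : AddCircle (2:ℝ))).re := by
      simp [hGcdef]
    rw [h1']
    refine le_trans (Complex.abs_re_le_norm _) ?_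
    have := ContinuousMap.norm_coe_le_norm (Q - Gc) ((x:ℝ) : AddCircle (2:ℝ))
    rw [dist_comm, dist_eq_norm]
    exact le_trans this (le_of_eq rfl)
  have hb2 : |(Q ((-x:ℝ) : AddCircle (2:ℝ))).re - G ((-x:ℝ) : AddCircle (2:ℝ))| ≤ dist Gc Q := by
    have h1' : (Q ((-x:ℝ) : AddCircle (2:ℝ))).re - G ((-x:ℝ) : AddCircle (2:ℝ))
        = ((Q - Gc) ((-x:ℝ) : AddCircle (2:ℝ))).re := by
      simp [hGcdef]
    rw [h1']
    refine le_trans (Complex.abs_re_le_norm _) ?_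
    have := ContinuousMap.norm_coe_le_norm (Q - Gc) ((-x:ℝ) : AddCircle (2:ℝ))
    rw [dist_comm, dist_eq_norm]
    exact le_trans this (le_of_eq rfl)
  have hsum : ∑ m ∈ c.support, (-((c m).im)) * Real.sin ((m:ℝ) * π * x)
      = ((Q ((x:ℝ) : AddCircle (2:ℝ))).re - (Q ((-x:ℝ) : AddCircle (2:ℝ))).re) / 2 := by
    rw [key x]
    rw [show (2 * ∑ m ∈ c.support, (-((c m).im)) * Real.sin (π * m * x)) / 2
      = ∑ m ∈ c.support, (-((c m).im)) * Real.sin (π * m * x) by ring]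
    refine Finset.sum_congr rfl (fun m _ => ?_)
    rw [show (m:ℝ) * π * x = π * m * x by ring]
  have hfx : f x = (G ((x:ℝ) : AddCircle (2:ℝ)) - G ((-x:ℝ) : AddCircle (2:ℝ))) / 2 := by
    rw [hq, hq']; ring
  rw [hsum, hfx]
  have l1 := abs_le.mp hb1
  have l2 := abs_le.mp hb2
  rw [abs_le]
  constructor <;> linarith [le_of_lt hQdist]



lemma heat_max_principle (p : ℝ) (hp : 0 < p) (a b : ℝ) (hab : a < b)
    (z zx zxx : ℝ → ℝ → ℝ)
    (hz : ContinuousOn (fun q : ℝ × ℝ => z q.1 q.2) (Set.Icc a b ×ˢ Set.Icc 0 1))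
    (hzt : ∀ t ∈ Set.Ioc a b, ∀ x ∈ Set.Ioo (0:ℝ) 1,
        HasDerivAt (fun s => z s x) (p * zxx t x) t)
    (hzx : ∀ t ∈ Set.Ioc a b, ∀ x ∈ Set.Ioo (0:ℝ) 1, HasDerivAt (z t) (zx t x) x)
    (hzxx : ∀ t ∈ Set.Ioc a b, ∀ x ∈ Set.Ioo (0:ℝ) 1, HasDerivAt (zx t) (zxx t x) x)
    (M : ℝ)
    (hinit : ∀ x ∈ Set.Icc (0:ℝ) 1, z a x ≤ M)
    (hside0 : ∀ t ∈ Set.Icc a b, z t 0 ≤ M)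
    (hside1 : ∀ t ∈ Set.Icc a b, z t 1 ≤ M) :
    ∀ t ∈ Set.Icc a b, ∀ x ∈ Set.Icc (0:ℝ) 1, z t x ≤ M := by
  have key : ∀ η : ℝ, 0 < η → ∀ t ∈ Set.Icc a b, ∀ x ∈ Set.Icc (0:ℝ) 1,
      z t x - η * (t - a) ≤ M := by
    intro η hη
    set W : ℝ × ℝ → ℝ := fun q => z q.1 q.2 - η * (q.1 - a) with hW
    set K : Set (ℝ × ℝ) := Set.Icc a b ×ˢ Set.Icc 0 1 with hK
    have hKc : IsCompact K := (isCompact_Icc).prod (isCompact_Icc)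
    have hKne : K.Nonempty := ⟨(a, 0), by
      constructor
      · exact ⟨le_refl a, le_of_lt hab⟩
      · exact ⟨le_refl 0, by norm_num⟩⟩
    have hWc : ContinuousOn W K := by
      apply ContinuousOn.sub hz
      exact (continuous_const.mul ((continuous_fst).sub continuous_const)).continuousOn
    obtain ⟨q0, hq0K, hq0max⟩ := hKc.exists_isMaxOn hKne hWc
    have hq0max' : ∀ q ∈ K, W q ≤ W q0 := fun q hq => hq0max hq
    obtain ⟨ht0, hx0⟩ := hq0K
    -- show the max point is on the parabolic boundary
    have hbdry : W q0 ≤ M := by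
      by_cases hta : q0.1 = a
      · have := hinit q0.2 hx0
        simp only [hW, hta, sub_self, mul_zero, sub_zero]
        exact this
      · have hta' : q0.1 ∈ Set.Ioc a b := ⟨lt_of_le_of_ne ht0.1 (Ne.symm hta), ht0.2⟩
        by_cases hx00 : q0.2 = 0
        · have := hside0 q0.1 ht0
          have hnn : 0 ≤ η * (q0.1 - a) := by
            apply mul_nonneg (le_of_lt hη); linarith [ht0.1]
          simp only [hW, hx00] at *
          linarith
        by_cases hx01 : q0.2 = 1
        · have := hside1 q0.1 ht0
          have hnn : 0 ≤ η * (q0.1 - a) := by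
            apply mul_nonneg (le_of_lt hη); linarith [ht0.1]
          simp only [hW, hx01] at *
          linarith
        · exfalso
          have hx0' : q0.2 ∈ Set.Ioo (0:ℝ) 1 :=
            ⟨lt_of_le_of_ne hx0.1 (Ne.symm hx00), lt_of_le_of_ne hx0.2 hx01⟩
          -- time derivative at the max point is ≥ 0
          have hgd : HasDerivAt (fun s => z s q0.2 - η * (s - a)) (p * zxx q0.1 q0.2 - η) q0.1 := by
            have h1 := hzt q0.1 hta' q0.2 hx0'
            have h2 : HasDerivAt (fun s : ℝ => η * (s - a)) η q0.1 := by
              simpa using ((hasDerivAt_id q0.1).sub_const a).const_mul η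
            exact h1.sub h2
          have hderiv_nonneg : 0 ≤ p * zxx q0.1 q0.2 - η := by
            rcases lt_or_eq_of_le ht0.2 with htb | htb
            · -- interior in time: local max, derivative = 0
              have hloc : IsLocalMax (fun s => z s q0.2 - η * (s - a)) q0.1 := by
                have hnb : Set.Icc a b ∈ 𝓝 q0.1 := Icc_mem_nhds hta'.1 htb
                refine Filter.eventually_of_mem hnb (fun s hs => ?_)
                have := hq0max' (s, q0.2) ⟨hs, hx0⟩
                simpa [hW] using this
              have := hloc.hasDerivAt_eq_zero hgd
              linarith [this.ge, this.le]
            · -- t = b : left-sided max, derivative ≥ 0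
              have hslope := hasDerivAt_iff_tendsto_slope.mp hgd
              have hmem : Set.Ioo a b ∈ 𝓝[<] q0.1 := by
                rw [htb]
                exact Ioo_mem_nhdsLT_of_mem ⟨hab, le_refl b⟩
              have hsub : 𝓝[<] q0.1 ≤ 𝓝[≠] q0.1 :=
                nhdsWithin_mono _ (fun s hs => ne_of_lt hs)
              have hslope' := hslope.mono_left hsub
              haveI : (𝓝[<] q0.1).NeBot := by
                rw [htb]; infer_instance
              refine ge_of_tendsto hslope' ?_
              refine Filter.eventually_of_mem hmem (fun s hs => ?_)
              have hsK : (s, q0.2) ∈ K := ⟨⟨le_of_lt hs.1, le_of_lt hs.2⟩, hx0⟩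
              have hle := hq0max' (s, q0.2) hsK
              have hnum : (fun s => z s q0.2 - η * (s - a)) s
                  - (fun s => z s q0.2 - η * (s - a)) q0.1 ≤ 0 := by
                simpa [hW] using hle
              have hden : s - q0.1 < 0 := by rw [htb]; linarith [hs.2]
              rw [slope_def_field]
              rw [div_nonneg_iff]
              right
              constructor
              · simpa using hnum
              · linarith
          have hzxx_pos : 0 < zxx q0.1 q0.2 := by
            have : η ≤ p * zxx q0.1 q0.2 := by linarith
            nlinarith
          -- space direction: local max, first derivative zero, second deriv > 0 gives contradiction
          have hlocx : IsLocalMax (z q0.1) q0.2 := by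
            have hnb : Set.Icc (0:ℝ) 1 ∈ 𝓝 q0.2 := Icc_mem_nhds hx0'.1 hx0'.2
            refine Filter.eventually_of_mem hnb (fun y hy => ?_)
            have := hq0max' (q0.1, y) ⟨ht0, hy⟩
            simpa [hW] using this
          have hzx0 : zx q0.1 q0.2 = 0 := hlocx.hasDerivAt_eq_zero (hzx q0.1 hta' q0.2 hx0')
          have hslope2 := hasDerivAt_iff_tendsto_slope.mp (hzxx q0.1 hta' q0.2 hx0')
          have hsub2 : 𝓝[>] q0.2 ≤ 𝓝[≠] q0.2 :=
            nhdsWithin_mono _ (fun s hs => ne_of_gt hs)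
          have hslope2' := hslope2.mono_left hsub2
          have hev : ∀ᶠ y in 𝓝[>] q0.2, 0 < slope (zx q0.1) q0.2 y :=
            hslope2'.eventually (eventually_gt_nhds hzxx_pos)
          obtain ⟨u, hu, husub⟩ := mem_nhdsGT_iff_exists_Ioo_subset.mp hev
          set d : ℝ := min u 1 with hd
          have hdgt : q0.2 < d := lt_min hu hx0'.2
          set e : ℝ := (q0.2 + d) / 2 with he
          have hlt1 : e < d := by rw [he]; linarith
          have hlt2 : q0.2 < e := by rw [he]; linarith
          have hsubIoo : Set.Icc q0.2 e ⊆ Set.Ioo (0:ℝ) 1 := by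
            intro y hy
            constructor
            · linarith [hy.1, hx0'.1]
            · have : e < 1 := lt_of_lt_of_le hlt1 (min_le_right u 1)
              linarith [hy.2]
          have hmono : StrictMonoOn (z q0.1) (Set.Icc q0.2 e) := by
            apply strictMonoOn_of_deriv_pos (convex_Icc _ _)
            · intro y hy
              exact ((hzx q0.1 hta' y (hsubIoo hy)).continuousAt).continuousWithinAt
            · intro y hy
              rw [interior_Icc] at hy
              have hyIoo : y ∈ Set.Ioo (0:ℝ) 1 := hsubIoo ⟨le_of_lt hy.1, le_of_lt hy.2⟩
              rw [(hzx q0.1 hta' y hyIoo).deriv]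
              have hyIoou : y ∈ Set.Ioo q0.2 u :=
                ⟨hy.1, lt_of_lt_of_le (lt_trans hy.2 hlt1) (min_le_left u 1)⟩
              have hmem2 := husub hyIoou
              simp only [Set.mem_setOf_eq, slope_def_field, hzx0, sub_zero] at hmem2
              have hden : 0 < y - q0.2 := by linarith [hy.1]
              rcases div_pos_iff.mp hmem2 with ⟨h1, _⟩ | ⟨_, h2⟩
              · exact h1
              · linarith
          have hcontr : z q0.1 q0.2 < z q0.1 e :=
            hmono (Set.left_mem_Icc.mpr (le_of_lt hlt2))
              (Set.right_mem_Icc.mpr (le_of_lt hlt2)) hlt2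
          have heIcc : e ∈ Set.Icc (0:ℝ) 1 := by
            have := hsubIoo (Set.right_mem_Icc.mpr (le_of_lt hlt2))
            exact ⟨le_of_lt this.1, le_of_lt this.2⟩
          have := hq0max' (q0.1, e) ⟨ht0, heIcc⟩
          simp only [hW] at this
          linarith
    intro t ht x hx
    have := hq0max' (t, x) ⟨ht, hx⟩
    simp only [hW] at this hbdry
    linarith
  intro t ht x hx
  refine le_of_forall_pos_le_add (fun ε hε => ?_)
  have hη : 0 < ε / (b - a + 1) := by
    apply div_pos hε; linarith
  have := key (ε / (b - a + 1)) hη t ht x hx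
  have hb1 : ε / (b - a + 1) * (t - a) ≤ ε := by
    rw [div_mul_eq_mul_div, div_le_iff₀ (by linarith : (0:ℝ) < b - a + 1)]
    have h1 : t - a ≤ b - a := by linarith [ht.2]
    nlinarith [ht.1, hε.le]
  linarith

lemma mode_evolution
    (p θ T : ℝ) (hp : 0 < p) (u : ℝ → ℝ → ℝ)
    (hu_cont : Continuous (fun q : ℝ × ℝ => u q.1 q.2))
    (hu_reg : ∀ t ∈ Set.Ioo (0:ℝ) T, ContDiff ℝ 2 (u t))
    (hpde : ∀ t ∈ Set.Ioo (0:ℝ) T, ∀ x ∈ Set.Ioo (0:ℝ) 1,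
      HasDerivAt (fun s => u s x) (p * deriv (deriv (u t)) x + θ * u t x) t)
    (hzero0 : ∀ t ∈ Set.Ioo (0:ℝ) T, u t 0 = 0)
    (hzero1 : ∀ t ∈ Set.Ioo (0:ℝ) T, u t 1 = 0)
    (s t : ℝ) (hs : s ∈ Set.Ioo (0:ℝ) T) (hst : s ≤ t) (htT : t < T) (n : ℕ) (hn : 1 ≤ n) :
    ∫ x in (0:ℝ)..1, Real.sin ((n:ℝ) * π * x) * u t x
      = Real.exp ((θ - (n:ℝ)^2 * π^2 * p) * (t - s))
        * ∫ x in (0:ℝ)..1, Real.sin ((n:ℝ) * π * x) * u s x := by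
  rcases eq_or_lt_of_le hst with rfl | hlt
  · simp
  -- continuity facts
  have hu_slice : ∀ r : ℝ, Continuous (u r) := by
    intro r
    exact hu_cont.comp (Continuous.prodMk_right r)
  set lam : ℤ → ℝ := fun m => θ - (m:ℝ)^2 * π^2 * p with hlam
  set lamn : ℝ := θ - (n:ℝ)^2 * π^2 * p with hlamn
  -- enough to show |LHS - RHS| ≤ ε' for all ε' > 0
  rw [← sub_eq_zero, ← abs_eq_zero]
  by_contra habs
  have habs' : 0 < |(∫ x in (0:ℝ)..1, Real.sin ((n:ℝ) * π * x) * u t x)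
      - Real.exp (lamn * (t - s)) * ∫ x in (0:ℝ)..1, Real.sin ((n:ℝ) * π * x) * u s x| :=
    lt_of_le_of_ne (abs_nonneg _) (Ne.symm habs)
  set D := |(∫ x in (0:ℝ)..1, Real.sin ((n:ℝ) * π * x) * u t x)
      - Real.exp (lamn * (t - s)) * ∫ x in (0:ℝ)..1, Real.sin ((n:ℝ) * π * x) * u s x| with hD
  set E : ℝ := Real.exp (|θ| * (t - s)) with hE
  have hEpos : 0 < E := Real.exp_pos _
  have hexpn : 0 < Real.exp (lamn * (t - s)) := Real.exp_pos _
  set ε : ℝ := D / (2 * (E + Real.exp (lamn * (t - s)) + 1)) with hεdef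
  have hden : 0 < E + Real.exp (lamn * (t - s)) + 1 := by positivity
  have hε : 0 < ε := by positivity
  -- approximate initial data by a sine polynomial
  obtain ⟨F, γ, hγ⟩ := sine_approx (u s) (hu_slice s) (hzero0 s hs) (hzero1 s hs) ε hε
  -- the comparison solution
  set v : ℝ → ℝ → ℝ := fun r x =>
    ∑ m ∈ F, γ m * Real.exp (lam m * (r - s)) * Real.sin ((m:ℝ) * π * x) with hv
  set vt : ℝ → ℝ → ℝ := fun r x =>
    ∑ m ∈ F, γ m * (lam m * Real.exp (lam m * (r - s))) * Real.sin ((m:ℝ) * π * x) with hvt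
  set vx : ℝ → ℝ → ℝ := fun r x =>
    ∑ m ∈ F, γ m * Real.exp (lam m * (r - s)) * ((m:ℝ) * π) * Real.cos ((m:ℝ) * π * x) with hvx
  set vxx : ℝ → ℝ → ℝ := fun r x =>
    ∑ m ∈ F, γ m * Real.exp (lam m * (r - s))
      * (-(((m:ℝ) * π)^2) * Real.sin ((m:ℝ) * π * x)) with hvxx
  have hv_cont : Continuous (fun q : ℝ × ℝ => v q.1 q.2) := by
    apply continuous_finset_sum
    intro m _
    apply Continuous.mul
    · apply Continuous.mul continuous_const
      exact Real.continuous_exp.comp (continuous_const.mul (continuous_fst.sub continuous_const))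
    · exact Real.continuous_sin.comp (continuous_const.mul continuous_snd)
  have hv_t : ∀ r x : ℝ, HasDerivAt (fun r' => v r' x) (vt r x) r := by
    intro r x
    apply HasDerivAt.fun_sum
    intro m _
    have h1 : HasDerivAt (fun r' : ℝ => lam m * (r' - s)) (lam m) r := by
      simpa using ((hasDerivAt_id r).sub_const s).const_mul (lam m)
    have h2 := h1.exp
    have h3 := (h2.const_mul (γ m)).mul_const (Real.sin ((m:ℝ) * π * x))
    refine h3.congr_deriv ?_
    ring
  have hv_x : ∀ r x : ℝ, HasDerivAt (v r) (vx r x) x := by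
    intro r x
    apply HasDerivAt.fun_sum
    intro m _
    have h1 : HasDerivAt (fun y : ℝ => (m:ℝ) * π * y) ((m:ℝ) * π) x := by
      simpa using (hasDerivAt_id x).const_mul ((m:ℝ) * π)
    have h2 := h1.sin
    have h3 := h2.const_mul (γ m * Real.exp (lam m * (r - s)))
    refine h3.congr_deriv ?_
    ring
  have hv_xx : ∀ r x : ℝ, HasDerivAt (vx r) (vxx r x) x := by
    intro r x
    apply HasDerivAt.fun_sum
    intro m _
    have h1 : HasDerivAt (fun y : ℝ => (m:ℝ) * π * y) ((m:ℝ) * π) x := by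
      simpa using (hasDerivAt_id x).const_mul ((m:ℝ) * π)
    have h2 := h1.cos
    have h3 := h2.const_mul (γ m * Real.exp (lam m * (r - s)) * ((m:ℝ) * π))
    refine h3.congr_deriv ?_
    ring
  have hv_pde : ∀ r x : ℝ, vt r x = p * vxx r x + θ * v r x := by
    intro r x
    simp only [hvt, hvxx, hv, Finset.mul_sum, ← Finset.sum_add_distrib]
    refine Finset.sum_congr rfl (fun m _ => ?_)
    simp only [hlam]
    ring
  have hv_bd0 : ∀ r : ℝ, v r 0 = 0 := by
    intro r
    simp only [hv]
    apply Finset.sum_eq_zero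
    intro m _
    simp
  have hv_bd1 : ∀ r : ℝ, v r 1 = 0 := by
    intro r
    simp only [hv]
    apply Finset.sum_eq_zero
    intro m _
    have : Real.sin ((m:ℝ) * π * 1) = 0 := by
      rw [mul_one]; exact Real.sin_int_mul_pi m
    rw [this, mul_zero]
  -- the transformed difference and the maximum principle
  set Z : ℝ → ℝ → ℝ := fun r x => Real.exp (-θ * (r - s)) * (u r x - v r x) with hZ
  set Zx : ℝ → ℝ → ℝ := fun r x =>
    Real.exp (-θ * (r - s)) * (deriv (u r) x - vx r x) with hZx
  set Zxx : ℝ → ℝ → ℝ := fun r x =>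
    Real.exp (-θ * (r - s)) * (deriv (deriv (u r)) x - vxx r x) with hZxx
  have hIoo : ∀ r ∈ Set.Ioc s t, r ∈ Set.Ioo (0:ℝ) T :=
    fun r hr => ⟨lt_trans hs.1 hr.1, lt_of_le_of_lt hr.2 htT⟩
  have hZc : ContinuousOn (fun q : ℝ × ℝ => Z q.1 q.2) (Set.Icc s t ×ˢ Set.Icc 0 1) := by
    apply Continuous.continuousOn
    apply Continuous.mul
    · exact Real.continuous_exp.comp (continuous_const.mul (continuous_fst.sub continuous_const))
    · exact hu_cont.sub hv_cont
  have hZt : ∀ r ∈ Set.Ioc s t, ∀ x ∈ Set.Ioo (0:ℝ) 1,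
      HasDerivAt (fun r' => Z r' x) (p * Zxx r x) r := by
    intro r hr x hx
    have h1 : HasDerivAt (fun r' : ℝ => Real.exp (-θ * (r' - s)))
        (-θ * Real.exp (-θ * (r - s))) r := by
      have ha : HasDerivAt (fun r' : ℝ => -θ * (r' - s)) (-θ) r := by
        simpa using ((hasDerivAt_id r).sub_const s).const_mul (-θ)
      have hb := ha.exp
      convert hb using 1
      try ring
    have h2 : HasDerivAt (fun r' => u r' x - v r' x)
        ((p * deriv (deriv (u r)) x + θ * u r x) - vt r x) r :=
      (hpde r (hIoo r hr) x hx).sub (hv_t r x)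
    have h3 := h1.mul h2
    refine h3.congr_deriv ?_
    rw [hv_pde r x]
    simp only [hZxx]
    ring
  have hZx' : ∀ r ∈ Set.Ioc s t, ∀ x ∈ Set.Ioo (0:ℝ) 1, HasDerivAt (Z r) (Zx r x) x := by
    intro r hr x hx
    have hdu : HasDerivAt (u r) (deriv (u r) x) x := by
      have := (hu_reg r (hIoo r hr)).differentiable (by norm_num)
      exact (this x).hasDerivAt
    exact ((hdu.sub (hv_x r x)).const_mul _)
  have hZxx' : ∀ r ∈ Set.Ioc s t, ∀ x ∈ Set.Ioo (0:ℝ) 1, HasDerivAt (Zx r) (Zxx r x) x := by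
    intro r hr x hx
    have hreg := hu_reg r (hIoo r hr)
    have hreg' : ContDiff ℝ (1+1) (u r) := by
      convert hreg using 2 <;> norm_num
    rw [contDiff_succ_iff_deriv] at hreg'
    have hdu2 : HasDerivAt (deriv (u r)) (deriv (deriv (u r)) x) x := by
      have := hreg'.2.2.differentiable (by norm_num)
      exact (this x).hasDerivAt
    exact ((hdu2.sub (hv_xx r x)).const_mul _)
  have hsIoo : ∀ r ∈ Set.Icc s t, r ∈ Set.Ioo (0:ℝ) T :=
    fun r hr => ⟨lt_of_lt_of_le hs.1 hr.1, lt_of_le_of_lt hr.2 htT⟩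
  have hZinit : ∀ sgn : ℝ, |sgn| = 1 → ∀ x ∈ Set.Icc (0:ℝ) 1, sgn * Z s x ≤ ε := by
    intro sgn hsgn x hx
    have : Z s x = u s x - v s x := by
      simp [hZ]
    have hvs : v s x = ∑ m ∈ F, γ m * Real.sin ((m:ℝ) * π * x) := by
      simp [hv]
    have := hγ x hx
    have habs2 : |Z s x| ≤ ε := by
      rw [‹Z s x = u s x - v s x›, hvs]
      rw [abs_sub_comm]
      exact hγ x hx
    calc sgn * Z s x ≤ |sgn * Z s x| := le_abs_self _
      _ = |Z s x| := by rw [abs_mul, hsgn, one_mul]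
      _ ≤ ε := habs2
  have hZside0 : ∀ sgn : ℝ, ∀ r ∈ Set.Icc s t, sgn * Z r 0 = 0 := by
    intro sgn r hr
    simp [hZ, hzero0 r (hsIoo r hr), hv_bd0 r]
  have hZside1 : ∀ sgn : ℝ, ∀ r ∈ Set.Icc s t, sgn * Z r 1 = 0 := by
    intro sgn r hr
    simp [hZ, hzero1 r (hsIoo r hr), hv_bd1 r]
  have hMPpos := heat_max_principle p hp s t hlt Z Zx Zxx hZc hZt hZx' hZxx' ε
    (fun x hx => by simpa using hZinit 1 (by norm_num) x hx)
    (fun r hr => le_of_eq_of_le (by simpa using hZside0 1 r hr) (le_of_lt hε))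
    (fun r hr => le_of_eq_of_le (by simpa using hZside1 1 r hr) (le_of_lt hε))
  have hMPneg := heat_max_principle p hp s t hlt (fun r x => -Z r x)
    (fun r x => -Zx r x) (fun r x => -Zxx r x)
    (by
      apply ContinuousOn.neg
      exact hZc)
    (fun r hr x hx => by
      have := (hZt r hr x hx).neg
      refine this.congr_deriv ?_
      ring)
    (fun r hr x hx => (hZx' r hr x hx).neg)
    (fun r hr x hx => (hZxx' r hr x hx).neg)
    ε
    (fun x hx => by simpa using hZinit (-1) (by norm_num) x hx)
    (fun r hr => le_of_eq_of_le (by simpa using hZside0 (-1) r hr) (le_of_lt hε))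
    (fun r hr => le_of_eq_of_le (by simpa using hZside1 (-1) r hr) (le_of_lt hε))
  -- pointwise bound on u - v at time t
  have hbound : ∀ x ∈ Set.Icc (0:ℝ) 1, |u t x - v t x| ≤ ε * E := by
    intro x hx
    have htmem : t ∈ Set.Icc s t := ⟨hst, le_refl t⟩
    have h1 := hMPpos t htmem x hx
    have h2 : -Z t x ≤ ε := hMPneg t htmem x hx
    have habsZ : |Z t x| ≤ ε := abs_le.mpr ⟨by linarith, h1⟩
    have hzval : u t x - v t x = Real.exp (θ * (t - s)) * Z t x := by
      simp only [hZ]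
      rw [← mul_assoc, ← Real.exp_add, show θ*(t-s) + -θ*(t-s) = 0 by ring,
        Real.exp_zero, one_mul]
    calc |u t x - v t x| = Real.exp (θ*(t-s)) * |Z t x| := by
          rw [hzval, abs_mul, abs_of_pos (Real.exp_pos _)]
      _ ≤ Real.exp (θ*(t-s)) * ε := by
          exact mul_le_mul_of_nonneg_left habsZ (Real.exp_pos _).le
      _ ≤ E * ε := by
          apply mul_le_mul_of_nonneg_right _ (le_of_lt hε)
          rw [hE]
          apply Real.exp_le_exp.mpr
          apply mul_le_mul_of_nonneg_right (le_abs_self θ) (by linarith)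
      _ = ε * E := by ring
  -- modes of v evolve exactly
  have hcont_sin : ∀ (r : ℝ) (w : ℝ → ℝ → ℝ), Continuous (fun q : ℝ × ℝ => w q.1 q.2) →
      IntervalIntegrable (fun x => Real.sin ((n:ℝ)*π*x) * w r x) MeasureTheory.volume 0 1 := by
    intro r w hw
    apply Continuous.intervalIntegrable
    exact (Real.continuous_sin.comp (continuous_const.mul continuous_id)).mul
      (hw.comp (Continuous.prodMk_right r))
  have expand : ∀ r : ℝ, ∫ x in (0:ℝ)..1, Real.sin ((n:ℝ)*π*x) * v r x
      = ∑ m ∈ F, γ m * Real.exp (lam m * (r-s))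
        * ∫ x in (0:ℝ)..1, Real.sin ((n:ℝ)*π*x) * Real.sin ((m:ℝ)*π*x) := by
    intro r
    have e1 : (fun x => Real.sin ((n:ℝ)*π*x) * v r x)
        = fun x => ∑ m ∈ F, γ m * Real.exp (lam m*(r-s))
            * (Real.sin ((n:ℝ)*π*x) * Real.sin ((m:ℝ)*π*x)) := by
      funext x
      simp only [hv, Finset.mul_sum]
      exact Finset.sum_congr rfl fun m _ => by ring
    rw [e1, intervalIntegral.integral_finset_sum]
    · exact Finset.sum_congr rfl fun m _ => by
        rw [intervalIntegral.integral_const_mul]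
    · intro m _
      apply Continuous.intervalIntegrable
      apply Continuous.mul continuous_const
      exact (Real.continuous_sin.comp (continuous_const.mul continuous_id)).mul
        (Real.continuous_sin.comp (continuous_const.mul continuous_id))
  have hmode_v : ∫ x in (0:ℝ)..1, Real.sin ((n:ℝ)*π*x) * v t x
      = Real.exp (lamn * (t-s)) * ∫ x in (0:ℝ)..1, Real.sin ((n:ℝ)*π*x) * v s x := by
    rw [expand t, expand s, Finset.mul_sum]
    refine Finset.sum_congr rfl fun m hm => ?_
    by_cases hcase : ((n:ℤ) - m ≠ 0) ∧ ((n:ℤ) + m ≠ 0)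
    · have horth := sin_orthogonal (n:ℤ) m hcase.1 hcase.2
      push_cast at horth
      rw [horth]
      ring
    · have hm2 : (m:ℝ)^2 = (n:ℝ)^2 := by
        rcases not_and_or.mp hcase with h | h
        · push_neg at h
          have : m = (n:ℤ) := by omega
          subst this
          push_cast
          ring
        · push_neg at h
          have : m = -(n:ℤ) := by omega
          subst this
          push_cast
          ring
      have hlameq : lam m = lamn := by
        rw [hlam, hlamn]
        simp only
        rw [hm2]
      rw [hlameq, sub_self, mul_zero, Real.exp_zero]
      ring
  -- value of v at time s
  have hvsx : ∀ x : ℝ, v s x = ∑ m ∈ F, γ m * Real.sin ((m:ℝ) * π * x) := by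
    intro x
    simp only [hv, sub_self, mul_zero, Real.exp_zero, mul_one]
  -- integral bounds
  have hint1 : |(∫ x in (0:ℝ)..1, Real.sin ((n:ℝ)*π*x) * u t x)
      - ∫ x in (0:ℝ)..1, Real.sin ((n:ℝ)*π*x) * v t x| ≤ ε * E := by
    rw [← intervalIntegral.integral_sub (hcont_sin t u hu_cont) (hcont_sin t v hv_cont)]
    have := intervalIntegral.norm_integral_le_of_norm_le_const
      (C := ε * E) (f := fun x => Real.sin ((n:ℝ)*π*x) * u t x - Real.sin ((n:ℝ)*π*x) * v t x)
      (a := (0:ℝ)) (b := 1) ?_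
    · rw [Real.norm_eq_abs] at this
      simpa using this
    · intro x hx
      rw [Set.uIoc_of_le (by norm_num : (0:ℝ) ≤ 1)] at hx
      have hxI : x ∈ Set.Icc (0:ℝ) 1 := ⟨le_of_lt hx.1, hx.2⟩
      show ‖Real.sin ((n:ℝ)*π*x) * u t x - Real.sin ((n:ℝ)*π*x) * v t x‖ ≤ ε * E
      rw [Real.norm_eq_abs, show Real.sin ((n:ℝ)*π*x) * u t x - Real.sin ((n:ℝ)*π*x) * v t x
        = Real.sin ((n:ℝ)*π*x) * (u t x - v t x) by ring, abs_mul]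
      calc |Real.sin ((n:ℝ)*π*x)| * |u t x - v t x| ≤ 1 * (ε * E) := by
            apply mul_le_mul (Real.abs_sin_le_one _) (hbound x hxI) (abs_nonneg _) (by norm_num)
        _ = ε * E := by ring
  have hint2 : |(∫ x in (0:ℝ)..1, Real.sin ((n:ℝ)*π*x) * v s x)
      - ∫ x in (0:ℝ)..1, Real.sin ((n:ℝ)*π*x) * u s x| ≤ ε := by
    rw [← intervalIntegral.integral_sub (hcont_sin s v hv_cont) (hcont_sin s u hu_cont)]
    have := intervalIntegral.norm_integral_le_of_norm_le_const
      (C := ε) (f := fun x => Real.sin ((n:ℝ)*π*x) * v s x - Real.sin ((n:ℝ)*π*x) * u s x)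
      (a := (0:ℝ)) (b := 1) ?_
    · rw [Real.norm_eq_abs] at this
      simpa using this
    · intro x hx
      rw [Set.uIoc_of_le (by norm_num : (0:ℝ) ≤ 1)] at hx
      have hxI : x ∈ Set.Icc (0:ℝ) 1 := ⟨le_of_lt hx.1, hx.2⟩
      show ‖Real.sin ((n:ℝ)*π*x) * v s x - Real.sin ((n:ℝ)*π*x) * u s x‖ ≤ ε
      rw [Real.norm_eq_abs, show Real.sin ((n:ℝ)*π*x) * v s x - Real.sin ((n:ℝ)*π*x) * u s x
        = Real.sin ((n:ℝ)*π*x) * (v s x - u s x) by ring, abs_mul]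
      have hb2 : |v s x - u s x| ≤ ε := by
        rw [hvsx x]
        exact hγ x hxI
      calc |Real.sin ((n:ℝ)*π*x)| * |v s x - u s x| ≤ 1 * ε := by
            apply mul_le_mul (Real.abs_sin_le_one _) hb2 (abs_nonneg _) (by norm_num)
        _ = ε := by ring
  -- assemble the contradiction
  have hfinal : D ≤ ε * E + Real.exp (lamn * (t-s)) * ε := by
    rw [hD]
    have e2 : (∫ x in (0:ℝ)..1, Real.sin ((n:ℝ)*π*x) * u t x)
        - Real.exp (lamn * (t - s)) * ∫ x in (0:ℝ)..1, Real.sin ((n:ℝ)*π*x) * u s x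
      = ((∫ x in (0:ℝ)..1, Real.sin ((n:ℝ)*π*x) * u t x)
          - ∫ x in (0:ℝ)..1, Real.sin ((n:ℝ)*π*x) * v t x)
        + Real.exp (lamn * (t-s)) * ((∫ x in (0:ℝ)..1, Real.sin ((n:ℝ)*π*x) * v s x)
          - ∫ x in (0:ℝ)..1, Real.sin ((n:ℝ)*π*x) * u s x) := by
      rw [hmode_v]
      ring
    rw [e2]
    calc |((∫ x in (0:ℝ)..1, Real.sin ((n:ℝ)*π*x) * u t x)
          - ∫ x in (0:ℝ)..1, Real.sin ((n:ℝ)*π*x) * v t x)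
        + Real.exp (lamn * (t-s)) * ((∫ x in (0:ℝ)..1, Real.sin ((n:ℝ)*π*x) * v s x)
          - ∫ x in (0:ℝ)..1, Real.sin ((n:ℝ)*π*x) * u s x)|
        ≤ |(∫ x in (0:ℝ)..1, Real.sin ((n:ℝ)*π*x) * u t x)
          - ∫ x in (0:ℝ)..1, Real.sin ((n:ℝ)*π*x) * v t x|
        + |Real.exp (lamn * (t-s)) * ((∫ x in (0:ℝ)..1, Real.sin ((n:ℝ)*π*x) * v s x)
          - ∫ x in (0:ℝ)..1, Real.sin ((n:ℝ)*π*x) * u s x)| := abs_add_le _ _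
      _ ≤ ε * E + Real.exp (lamn * (t-s)) * ε := by
          apply add_le_add hint1
          rw [abs_mul, abs_of_pos hexpn]
          exact mul_le_mul_of_nonneg_left hint2 (le_of_lt hexpn)
  have hεD : ε * (2 * (E + Real.exp (lamn * (t - s)) + 1)) = D := by
    rw [hεdef]
    field_simp
  nlinarith [hε, hEpos, hexpn, habs']

theorem zero_input_modes_vanish
    (p θ T : ℝ) (hp : 0 < p) (hT : 0 < T)
    (N : ℕ) (hN : 1 ≤ N) (k : ℕ → ℝ)
    (u : ℝ → ℝ → ℝ) (U : ℝ → ℝ)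
    (hu_cont : Continuous (fun q : ℝ × ℝ => u q.1 q.2))
    (hu_reg : ∀ t ∈ Set.Ioo (0:ℝ) T, ContDiff ℝ 2 (u t))
    (hpde : ∀ t ∈ Set.Ioo (0:ℝ) T, ∀ x ∈ Set.Ioo (0:ℝ) 1,
      HasDerivAt (fun s => u s x)
        (p * deriv (deriv (u t)) x + θ * u t x) t)
    (hbc0 : ∀ t ∈ Set.Ioo (0:ℝ) T, u t 0 = 0)
    (hbc1 : ∀ t ∈ Set.Ioo (0:ℝ) T, u t 1 = U t)
    (hU : ∀ t ∈ Set.Ico (0:ℝ) T,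
      U t = ∫ s in (0:ℝ)..1,
        (∑ n ∈ Finset.range N, k (n+1) * (Real.sqrt 2 * Real.sin (((n:ℝ)+1) * Real.pi * s)))
          * u t s)
    (hU0 : ∀ t ∈ Set.Ico (0:ℝ) T, U t = 0) :
    ∀ n : ℕ, 1 ≤ n → n ≤ N → ∀ t ∈ Set.Ico (0:ℝ) T,
      k n * ∫ x in (0:ℝ)..1, Real.sin ((n:ℝ) * Real.pi * x) * u t x = 0 := by
  have hzero1 : ∀ t ∈ Set.Ioo (0:ℝ) T, u t 1 = 0 := by
    intro t ht
    rw [hbc1 t ht, hU0 t ⟨le_of_lt ht.1, ht.2⟩]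
  set A : ℕ → ℝ → ℝ := fun n t => ∫ x in (0:ℝ)..1, Real.sin ((n:ℝ) * π * x) * u t x with hA
  have hAcont : ∀ n : ℕ, Continuous (A n) := by
    intro n
    apply continuous_parametric_intervalIntegral_of_continuous'
    have : Continuous fun q : ℝ × ℝ => Real.sin ((n:ℝ) * π * q.2) * u q.1 q.2 :=
      (Real.continuous_sin.comp (continuous_const.mul continuous_snd)).mul hu_cont
    exact this
  set lam : ℕ → ℝ := fun j => θ - (j:ℝ)^2 * π^2 * p with hlam
  -- the constraint as a finite sum of modes
  have hcons : ∀ r ∈ Set.Ico (0:ℝ) T,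
      ∑ i : Fin N, (k ((i:ℕ)+1) * Real.sqrt 2) * A ((i:ℕ)+1) r = 0 := by
    intro r hr
    have h0 := (hU r hr).symm.trans (hU0 r hr)
    have e1 : (fun x => (∑ j ∈ Finset.range N,
          k (j+1) * (Real.sqrt 2 * Real.sin (((j:ℝ)+1) * π * x))) * u r x)
        = fun x => ∑ j ∈ Finset.range N,
          (k (j+1) * Real.sqrt 2) * (Real.sin ((((j+1):ℕ):ℝ) * π * x) * u r x) := by
      funext x
      rw [Finset.sum_mul]
      refine Finset.sum_congr rfl (fun j _ => ?_)
      push_cast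
      ring
    rw [e1] at h0
    rw [intervalIntegral.integral_finset_sum] at h0
    · have e2 : ∀ j ∈ Finset.range N,
          (∫ x in (0:ℝ)..1, (k (j+1) * Real.sqrt 2) * (Real.sin ((((j+1):ℕ):ℝ) * π * x) * u r x))
          = (k (j+1) * Real.sqrt 2) * A (j+1) r := by
        intro j _
        rw [intervalIntegral.integral_const_mul]
      rw [Finset.sum_congr rfl e2] at h0
      rw [Fin.sum_univ_eq_sum_range (fun j => (k (j+1) * Real.sqrt 2) * A (j+1) r) N]
      exact h0
    · intro j _
      apply Continuous.intervalIntegrable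
      apply Continuous.mul continuous_const
      exact (Real.continuous_sin.comp (continuous_const.mul continuous_id)).mul
        (hu_cont.comp (Continuous.prodMk_right r))
  -- modes satisfy the exponential relation
  have hkey : ∀ s ∈ Set.Ioo (0:ℝ) T, ∀ i : Fin N, k ((i:ℕ)+1) * A ((i:ℕ)+1) s = 0 := by
    intro s hs i
    set c : Fin N → ℝ := fun i => k ((i:ℕ)+1) * Real.sqrt 2 * A ((i:ℕ)+1) s with hc
    have hg : ∀ τ ∈ Set.Ico (0:ℝ) (T - s),
        ∑ i : Fin N, c i * Real.exp (lam ((i:ℕ)+1) * τ) = 0 := by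
      intro τ hτ
      have htmem : s + τ ∈ Set.Ico (0:ℝ) T := by
        constructor
        · linarith [hs.1, hτ.1]
        · linarith [hτ.2]
      have h0 := hcons (s + τ) htmem
      rw [← h0]
      refine Finset.sum_congr rfl (fun j _ => ?_)
      have hme := mode_evolution p θ T hp u hu_cont hu_reg hpde hbc0 hzero1 s (s + τ) hs
        (by linarith [hτ.1]) (by linarith [hτ.2]) ((j:ℕ)+1) (by omega)
      have e3 : s + τ - s = τ := by ring
      rw [e3] at hme
      have hAval : A ((j:ℕ)+1) (s + τ) = Real.exp (lam ((j:ℕ)+1) * τ) * A ((j:ℕ)+1) s := hme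
      rw [hAval, hc, hlam]
      ring
    have hder : ∀ m : ℕ, ∀ τ ∈ Set.Ioo (0:ℝ) (T - s),
        ∑ i : Fin N, c i * (lam ((i:ℕ)+1))^m * Real.exp (lam ((i:ℕ)+1) * τ) = 0 := by
      intro m
      induction m with
      | zero =>
        intro τ hτ
        have := hg τ ⟨le_of_lt hτ.1, hτ.2⟩
        simpa using this
      | succ m ih =>
        intro τ hτ
        have hD : HasDerivAt
            (fun τ' => ∑ i : Fin N, c i * (lam ((i:ℕ)+1))^m * Real.exp (lam ((i:ℕ)+1) * τ'))
            (∑ i : Fin N, c i * (lam ((i:ℕ)+1))^(m+1) * Real.exp (lam ((i:ℕ)+1) * τ)) τ := by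
          apply HasDerivAt.fun_sum
          intro j _
          have h1 : HasDerivAt (fun τ' : ℝ => lam ((j:ℕ)+1) * τ') (lam ((j:ℕ)+1)) τ := by
            simpa using (hasDerivAt_id τ).const_mul (lam ((j:ℕ)+1))
          have h2 := (h1.exp).const_mul (c j * (lam ((j:ℕ)+1))^m)
          refine h2.congr_deriv ?_
          rw [pow_succ]
          ring
        have heq : (fun τ' => ∑ i : Fin N, c i * (lam ((i:ℕ)+1))^m
            * Real.exp (lam ((i:ℕ)+1) * τ')) =ᶠ[nhds τ] (fun _ => (0:ℝ)) := by
          refine Filter.eventuallyEq_of_mem (Ioo_mem_nhds hτ.1 hτ.2) (fun τ' hτ' => ?_)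
          exact ih τ' hτ'
        have hD0 : HasDerivAt (fun _ : ℝ => (0:ℝ))
            (∑ i : Fin N, c i * (lam ((i:ℕ)+1))^(m+1) * Real.exp (lam ((i:ℕ)+1) * τ)) τ :=
          hD.congr_of_eventuallyEq heq.symm
        exact (hD0.unique (hasDerivAt_const τ 0)).symm ▸ rfl
    -- Vandermonde
    set τ0 : ℝ := (T - s) / 2 with hτ0
    have hτ0mem : τ0 ∈ Set.Ioo (0:ℝ) (T - s) := by
      constructor
      · rw [hτ0]; linarith [hs.2]
      · rw [hτ0]; linarith [hs.2]
    have hfinj : Function.Injective (fun i : Fin N => lam ((i:ℕ)+1)) := by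
      intro i j hij
      simp only [hlam] at hij
      have hππ : (0:ℝ) < π^2 * p := by positivity
      have h2 : (((i:ℕ):ℝ)+1)^2 = (((j:ℕ):ℝ)+1)^2 := by
        have h3 : (((i:ℕ)+1 : ℕ):ℝ)^2 * (π^2 * p) = (((j:ℕ)+1 : ℕ):ℝ)^2 * (π^2 * p) := by
          push_cast
          push_cast at hij
          nlinarith [hij]
        have := mul_right_cancel₀ (ne_of_gt hππ) h3
        push_cast at this
        exact this
      have h4 : (((i:ℕ):ℝ)+1) = (((j:ℕ):ℝ)+1) := by
        nlinarith [Nat.cast_nonneg (α := ℝ) (i:ℕ), Nat.cast_nonneg (α := ℝ) (j:ℕ)]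
      have h5 : ((i:ℕ):ℝ) = ((j:ℕ):ℝ) := by linarith
      exact Fin.ext (Nat.cast_injective h5)
    have hvz : (fun i : Fin N => c i * Real.exp (lam ((i:ℕ)+1) * τ0)) = 0 := by
      apply Matrix.eq_zero_of_forall_pow_sum_mul_pow_eq_zero hfinj
      intro mi
      have := hder (mi:ℕ) τ0 hτ0mem
      rw [← this]
      refine Finset.sum_congr rfl (fun j _ => ?_)
      ring
    have hvi := congrFun hvz i
    simp only [Pi.zero_apply] at hvi
    have hc0 : c i = 0 := by
      rcases mul_eq_zero.mp hvi with h | h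
      · exact h
      · exact absurd h (Real.exp_ne_zero _)
    rw [hc, ] at hc0
    have hs2 : Real.sqrt 2 ≠ 0 := by
      have : (0:ℝ) < Real.sqrt 2 := Real.sqrt_pos.mpr (by norm_num)
      exact ne_of_gt this
    have : k ((i:ℕ)+1) * A ((i:ℕ)+1) s * Real.sqrt 2 = 0 := by
      rw [← hc0]; ring
    rcases mul_eq_zero.mp this with h | h
    · exact h
    · exact absurd h hs2
  -- conclude, including t = 0 by continuity
  intro n hn1 hnN t ht
  have hin : ∀ s ∈ Set.Ioo (0:ℝ) T, k n * A n s = 0 := by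
    intro s hs
    have hi : n - 1 < N := by omega
    have := hkey s hs ⟨n - 1, hi⟩
    have e : (n - 1) + 1 = n := by omega
    simpa [e] using this
  rcases eq_or_lt_of_le ht.1 with h0 | h0
  · -- t = 0
    subst h0
    have hlim : Filter.Tendsto (fun s => k n * A n s) (𝓝[>] (0:ℝ)) (𝓝 (k n * A n 0)) := by
      apply Filter.Tendsto.mono_left _ nhdsWithin_le_nhds
      exact ((continuous_const.mul (hAcont n)).tendsto 0)
    have hlim0 : Filter.Tendsto (fun s => k n * A n s) (𝓝[>] (0:ℝ)) (𝓝 0) := by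
      apply Filter.Tendsto.congr' _ tendsto_const_nhds
      refine Filter.eventuallyEq_of_mem (Ioo_mem_nhdsGT_of_mem ⟨le_refl (0:ℝ), hT⟩)
        (fun s hs => ?_)
      exact (hin s hs).symm
    exact tendsto_nhds_unique hlim hlim0
  · exact hin t ⟨h0, ht.2⟩
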